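/- Consider the equality gadget Q: take i·j+1 disjoint copies of T(i-1,j) together with two additional vertices u1, u2, where u1 and u2 are adjacent to every vertex of the copies but not to each other. Then in any (i,j)-coloring of Q, the vertices u1 and u2 receive the same color. -/

import Mathlib

/-!
A copy of `T(n+1, j)` cannot be `(n, j)`-colored: its root has a neighbour in each of the
`j + 1` copies of `T(n, j)` below it, so some copy avoids the root's color and induction applies.
Hence if `u₁` and `u₂` had distinct colors `a ≠ b` in an `(i, j)`-coloring of the gadget, each of
the `i·j + 1` copies of `T(i-1, j)` would contain a vertex of color `a` or `b`. At most `j` copies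
contain color `a`, since otherwise `u₁` has `j + 1` neighbours of its own color, and likewise at
most `j` contain `b`; but `2j < i·j + 1`.
-/

/-- Vertex type of the graph `T(n+1, j)` of the paper. -/
def TV : ℕ → ℕ → Type
  | 0, _ => Unit
  | n + 1, j => Option (Fin (j + 1) × TV n j)

/-- The graph `T(n+1, j)`: `Tgraph 0 j = K₁`; `Tgraph (n+1) j` is `j+1` disjoint copies of
`Tgraph n j` together with a universal vertex. -/
def Tgraph : (n : ℕ) → (j : ℕ) → SimpleGraph (TV n j)
  | 0, _ => ⊥
  | n + 1, j => SimpleGraph.fromRel (fun a b =>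
      match a, b with
      | none, _ => True
      | some _, none => False
      | some p, some q => p.1 = q.1 ∧ (Tgraph n j).Adj p.2 q.2)

/-- Vertex type of the equality gadget `Q(u₁, u₂, i, j)` with `i = m + 2`:
two endpoint vertices (`Sum.inl 0`, `Sum.inl 1`) plus `i·j + 1` disjoint copies of
`T(i-1, j) = Tgraph m j`. -/
def QV (m j : ℕ) : Type := (Fin 2) ⊕ (Fin ((m + 2) * j + 1) × TV m j)

/-- The equality gadget `Q(u₁, u₂, i, j)` with `i = m + 2`: `i·j + 1` disjoint copies of
`T(i-1, j)`, together with two vertices `u₁, u₂` adjacent to every vertex of the copies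
but not to each other. -/
def Qgraph (m j : ℕ) : SimpleGraph (QV m j) :=
  SimpleGraph.fromRel (fun a b =>
    match a, b with
    | Sum.inl _, Sum.inr _ => True
    | Sum.inr p, Sum.inr q => p.1 = q.1 ∧ (Tgraph m j).Adj p.2 q.2
    | _, _ => False)

namespace SimpleGraph
variable {V W α : Type*}

/-- A `(C, d)`-coloring in the sense of the paper is an `f : V → Fin C` with
`G.IsDefectiveColoring d f`. -/
def IsDefectiveColoring (G : SimpleGraph V) (d : ℕ) (f : V → α) : Prop :=
  ∀ v, {u | G.Adj v u ∧ f u = f v}.ncard ≤ d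

theorem IsDefectiveColoring.comp_embedding {G : SimpleGraph V} {H : SimpleGraph W} [Finite V]
    {d : ℕ} {f : V → α} (hf : G.IsDefectiveColoring d f) (φ : H ↪g G) :
    H.IsDefectiveColoring d (f ∘ φ) := fun v =>
  (Set.ncard_le_ncard_of_injOn φ (fun _ h => And.intro (φ.map_adj_iff.mpr h.1) h.2)
    φ.injective.injOn (Set.toFinite _)).trans (hf (φ v))

theorem IsDefectiveColoring.card_le {G : SimpleGraph V} [Finite V] {d : ℕ} {f : V → α}
    {ι : Type*} (hf : G.IsDefectiveColoring d f) {v : V} (w : ι → V)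
    (hw : Function.Injective w) (hadj : ∀ k, G.Adj v (w k)) (hcol : ∀ k, f (w k) = f v) :
    Nat.card ι ≤ d := by
  rw [← Set.ncard_range_of_injective hw]
  refine (Set.ncard_le_ncard ?_ (Set.toFinite _)).trans (hf v)
  rintro _ ⟨k, rfl⟩
  exact ⟨hadj k, hcol k⟩

end SimpleGraph

@[simp] theorem Tgraph.succ_adj_none_some {n j : ℕ} (p : Fin (j + 1) × TV n j) :
    (Tgraph (n + 1) j).Adj none (some p) :=
  (SimpleGraph.fromRel_adj _ _ _).mpr ⟨(Option.some_ne_none p).symm, .inl trivial⟩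

@[simp] theorem Tgraph.succ_adj_some_some {n j : ℕ} {p q : Fin (j + 1) × TV n j} :
    (Tgraph (n + 1) j).Adj (some p) (some q) ↔ p.1 = q.1 ∧ (Tgraph n j).Adj p.2 q.2 := by
  refine (SimpleGraph.fromRel_adj _ _ _).trans ⟨?_, fun h => ⟨fun e => ?_, .inl h⟩⟩
  · rintro ⟨-, h | h⟩
    exacts [h, ⟨h.1.symm, h.2.symm⟩]
  · cases e
    exact h.2.ne rfl

@[simp] theorem Qgraph.adj_inl_inr {m j : ℕ} (a : Fin 2) (p : Fin ((m + 2) * j + 1) × TV m j) :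
    (Qgraph m j).Adj (.inl a) (.inr p) :=
  (SimpleGraph.fromRel_adj _ _ _).mpr ⟨Sum.inl_ne_inr, .inl trivial⟩

@[simp] theorem Qgraph.adj_inr_inr {m j : ℕ} {p q : Fin ((m + 2) * j + 1) × TV m j} :
    (Qgraph m j).Adj (.inr p) (.inr q) ↔ p.1 = q.1 ∧ (Tgraph m j).Adj p.2 q.2 := by
  refine (SimpleGraph.fromRel_adj _ _ _).trans ⟨?_, fun h => ⟨fun e => ?_, .inl h⟩⟩
  · rintro ⟨-, h | h⟩
    exacts [h, ⟨h.1.symm, h.2.symm⟩]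
  · cases e
    exact h.2.ne rfl

instance TV.finite : ∀ n j : ℕ, Finite (TV n j)
  | 0, _ => inferInstanceAs (Finite Unit)
  | n + 1, j => haveI := TV.finite n j; inferInstanceAs (Finite (Option (Fin (j + 1) × TV n j)))

instance QV.finite (m j : ℕ) : Finite (QV m j) := inferInstanceAs (Finite (_ ⊕ _))

def Tgraph.copy (n j : ℕ) (k : Fin (j + 1)) : Tgraph n j ↪g Tgraph (n + 1) j where
  toFun v := (some (k, v) : TV (n + 1) j)
  inj' _ _ h := congrArg Prod.snd (Option.some.inj h)
  map_rel_iff' := Tgraph.succ_adj_some_some.trans (and_iff_right rfl)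

@[simp] theorem Tgraph.copy_apply {n j : ℕ} (k : Fin (j + 1)) (v : TV n j) :
    Tgraph.copy n j k v = some (k, v) := rfl

def Qgraph.copy (m j : ℕ) (k : Fin ((m + 2) * j + 1)) : Tgraph m j ↪g Qgraph m j where
  toFun v := (.inr (k, v) : QV m j)
  inj' _ _ h := congrArg Prod.snd (Sum.inr.inj h)
  map_rel_iff' := Qgraph.adj_inr_inr.trans (and_iff_right rfl)

@[simp] theorem Qgraph.copy_apply {m j : ℕ} (k : Fin ((m + 2) * j + 1)) (v : TV m j) :
    Qgraph.copy m j k v = .inr (k, v) := rfl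

theorem Tgraph.lt_card_of_isDefectiveColoring {α : Type*} [DecidableEq α] :
    ∀ {n j : ℕ} {g : TV n j → α}, (Tgraph n j).IsDefectiveColoring j g →
      ∀ {s : Finset α}, (∀ v, g v ∈ s) → n < s.card
  | 0, _, g, _, _, hs => Finset.card_pos.mpr ⟨g (), hs ()⟩
  | n + 1, j, g, hg, s, hs => by
    have hcopy : ∃ k, ∀ v, g (Tgraph.copy n j k v) ≠ g none := by
      by_contra! h
      choose w hw using h
      have := hg.card_le (fun k => Tgraph.copy n j k (w k))
        (fun k l e => congrArg Prod.fst (Option.some.inj e)) (fun _ => by simp) hw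
      simp at this
    obtain ⟨k, hk⟩ := hcopy
    have := lt_card_of_isDefectiveColoring (hg.comp_embedding (Tgraph.copy n j k))
      (s := s.erase (g none)) fun v => Finset.mem_erase.mpr ⟨hk v, hs _⟩
    rw [Finset.card_erase_of_mem (hs none)] at this
    omega

theorem Tgraph.exists_eq_or_eq {α : Type*} [Fintype α] {m j : ℕ} (hα : Fintype.card α ≤ m + 2)
    {g : TV m j → α} (hg : (Tgraph m j).IsDefectiveColoring j g) {a b : α} (hab : a ≠ b) :
    ∃ v, g v = a ∨ g v = b := by
  classical
  by_contra! h
  have := Tgraph.lt_card_of_isDefectiveColoring hg (s := {a, b}ᶜ) fun v => by simp [h v]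
  rw [Finset.card_compl, Finset.card_pair hab] at this
  omega

open scoped Classical in
noncomputable def Qgraph.copiesWithColor {α : Type*} {m j : ℕ} (f : QV m j → α) (c : α) :
    Finset (Fin ((m + 2) * j + 1)) :=
  {k | ∃ v, f (.inr (k, v)) = c}

@[simp] theorem Qgraph.mem_copiesWithColor {α : Type*} {m j : ℕ} {f : QV m j → α} {c : α}
    {k : Fin ((m + 2) * j + 1)} : k ∈ Qgraph.copiesWithColor f c ↔ ∃ v, f (.inr (k, v)) = c := by
  simp [Qgraph.copiesWithColor]

theorem Qgraph.card_copiesWithColor_le {α : Type*} {m j : ℕ} {f : QV m j → α}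
    (hf : (Qgraph m j).IsDefectiveColoring j f) (t : Fin 2) :
    (Qgraph.copiesWithColor f (f (.inl t))).card ≤ j := by
  set S := Qgraph.copiesWithColor f (f (.inl t))
  choose w hw using fun k : S => mem_copiesWithColor.mp k.2
  have := hf.card_le (v := .inl t) (fun k : S => Qgraph.copy m j k (w k))
    (fun k l e => Subtype.ext (congrArg Prod.fst (Sum.inr.inj e))) (fun _ => by simp) hw
  simpa using this

/-- In any `(i, j)`-coloring of the equality gadget (here `i = m + 2`), the two endpoints
`u₁` and `u₂` receive the same color. -/
theorem equalityGadget_forces_equal (m j : ℕ) (f : QV m j → Fin (m + 2))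
    (hf : ∀ v : QV m j, {u | (Qgraph m j).Adj v u ∧ f u = f v}.ncard ≤ j) :
    f (Sum.inl 0) = f (Sum.inl 1) := by
  by_contra hne
  have hf : (Qgraph m j).IsDefectiveColoring j f := hf
  have hcover : (Finset.univ : Finset (Fin ((m + 2) * j + 1))) ⊆
      Qgraph.copiesWithColor f (f (.inl 0)) ∪ Qgraph.copiesWithColor f (f (.inl 1)) := by
    intro k _
    obtain ⟨v, hv⟩ := Tgraph.exists_eq_or_eq (by simp) (hf.comp_embedding (Qgraph.copy m j k)) hne
    simpa [Finset.mem_union] using hv.imp (⟨v, ·⟩) (⟨v, ·⟩)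
  have hcard := (Finset.card_le_card hcover).trans (Finset.card_union_le _ _)
  have h0 := Qgraph.card_copiesWithColor_le hf 0
  have h1 := Qgraph.card_copiesWithColor_le hf 1
  have : 2 * j ≤ (m + 2) * j := Nat.mul_le_mul_right _ (by omega)
  simp only [Finset.card_univ, Fintype.card_fin] at hcard
  omega
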